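/- The Laplacian of the rooted 3-uniform semigraph tree T³_n has eigenvalues (5+√5)/2 and (5−√5)/2 each with multiplicity n−1, eigenvalue 0 with multiplicity 1, and two further eigenvalues (3n+5 ± √(9n²−10n+5))/2, the roots of λ² − (3n+5)λ + 10n + 5. -/

import Mathlib

open Matrix Polynomial BigOperators

/-- The Laplacian of the rooted 3-uniform semigraph tree `T³_n` on `2n+1` vertices
`v₁, …, v_{2n+1}` (vertex `v_k` has index `k - 1`), with `n` full edges
`(v₁, v_{2i}, v_{2i+1})` sharing the root `v₁`. -/
noncomputable def treeLap (n : ℕ) : Matrix (Fin (2*n + 1)) (Fin (2*n + 1)) ℝ :=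
  fun i j =>
    if (i : ℕ) = 0 then
      (if (j : ℕ) = 0 then 3*(n : ℝ) else if (j : ℕ) % 2 = 1 then -1 else -2)
    else if (i : ℕ) % 2 = 1 then
      (if (j : ℕ) = 0 then -1 else if j = i then 2
        else if (j : ℕ) = (i : ℕ) + 1 then -1 else 0)
    else
      (if (j : ℕ) = 0 then -2 else if j = i then 3
        else if (j : ℕ) + 1 = (i : ℕ) then -1 else 0)

def treeEquiv (n : ℕ) : (Fin 1 ⊕ Fin 2 × Fin n) ≃ Fin (2*n+1) where
  toFun x := match x with
    | .inl _ => ⟨0, by omega⟩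
    | .inr (r, i) => ⟨2*(i:ℕ)+(r:ℕ)+1, by omega⟩
  invFun k := if h : (k:ℕ) = 0 then .inl 0 else
    .inr (⟨((k:ℕ)-1) % 2, by omega⟩, ⟨((k:ℕ)-1)/2, by omega⟩)
  left_inv := by
    rintro (x | ⟨r, i⟩)
    · simp [Fin.fin_one_eq_zero x]
    · have hr := r.isLt; have hi := i.isLt
      simp only []
      rw [dif_neg (by simp)]
      congr 1
      ext <;> simp <;> omega
  right_inv := by
    intro k
    by_cases h : (k:ℕ) = 0
    · simp only [dif_pos h]; exact Fin.ext (by simp [h])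
    · simp only [dif_neg h]; exact Fin.ext (by simp; omega)

noncomputable def blkA (n : ℕ) : Matrix (Fin 1) (Fin 1) (Polynomial ℝ) :=
  fun _ _ => X - C (3*(n:ℝ))
noncomputable def blkB (n : ℕ) : Matrix (Fin 1) (Fin 2 × Fin n) (Polynomial ℝ) :=
  fun _ p => if p.1 = 0 then 1 else 2
noncomputable def blkC (n : ℕ) : Matrix (Fin 2 × Fin n) (Fin 1) (Polynomial ℝ) :=
  fun p _ => if p.1 = 0 then 1 else 2
noncomputable def dmat : Matrix (Fin 2) (Fin 2) (Polynomial ℝ) :=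
  !![X - 2, 1; 1, X - 3]


lemma reindex_charmatrix (n : ℕ) :
    (charmatrix (treeLap n)).submatrix (treeEquiv n) (treeEquiv n) =
      fromBlocks (blkA n) (blkB n) (blkC n) (blockDiagonal fun _ : Fin n => dmat) := by
  refine Matrix.ext fun x y => ?_
  have h1 : ∀ x : Fin 1, treeEquiv n (Sum.inl x) = ⟨0, by omega⟩ := fun _ => rfl
  have h2 : ∀ (r : Fin 2) (i : Fin n), treeEquiv n (Sum.inr (r,i))
      = ⟨2*(i:ℕ)+(r:ℕ)+1, by omega⟩ := fun _ _ => rfl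
  have m1 : ∀ k:ℕ, (2*k+1) % 2 = 1 := fun k => by omega
  have m0 : ∀ k:ℕ, (2*k+1+1) % 2 = 0 := fun k => by omega
  rcases x with x | ⟨r, i⟩ <;> rcases y with y | ⟨s, j⟩
  · rw [submatrix_apply, h1, h1, charmatrix_apply_eq]
    simp [treeLap, fromBlocks, blkA]
  · rw [submatrix_apply, h1, h2,
      charmatrix_apply_ne _ _ _ (Ne.symm (Fin.ne_of_val_ne (by simp)))]
    fin_cases s <;> simp [treeLap, fromBlocks, blkB, m1, m0] <;> norm_num [map_ofNat]
  · rw [submatrix_apply, h2, h1,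
      charmatrix_apply_ne _ _ _ (Fin.ne_of_val_ne (by simp))]
    fin_cases r <;> simp [treeLap, fromBlocks, blkC, m1, m0] <;> norm_num [map_ofNat]
  · rw [submatrix_apply, h2, h2]
    by_cases hij : i = j
    · subst hij
      rcases eq_or_ne r s with hrs | hrs
      · subst hrs
        rw [charmatrix_apply_eq]
        fin_cases r <;>
          · simp only [fromBlocks_apply₂₂, blockDiagonal_apply_eq]
            simp [treeLap, dmat, m1, m0]
            norm_num [map_ofNat]
      · have hv : (r:ℕ) ≠ (s:ℕ) := fun h => hrs (Fin.ext h)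
        rw [charmatrix_apply_ne _ _ _ (Fin.ne_of_val_ne (by simp; omega))]
        simp only [fromBlocks_apply₂₂, blockDiagonal_apply_eq]
        fin_cases r <;> fin_cases s <;> simp [treeLap, dmat, m1, m0, Fin.ext_iff] at hrs ⊢ <;>
          norm_num <;> omega
    · have hv : (i:ℕ) ≠ (j:ℕ) := fun h => hij (Fin.ext h)
      rw [charmatrix_apply_ne _ _ _ (Fin.ne_of_val_ne (by simp; omega))]
      rw [fromBlocks_apply₂₂, blockDiagonal_apply_ne _ _ _ hij]
      fin_cases r <;> fin_cases s <;>
        · simp only [treeLap, Fin.ext_iff]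
          norm_num
          split_ifs <;> first | omega | norm_num [map_ofNat]

noncomputable def qpoly : Polynomial ℝ := X^2 - 5*X + 5

noncomputable def wvec (n : ℕ) : Matrix (Fin 2 × Fin n) (Fin 1) (Polynomial ℝ) :=
  fun p _ => if p.1 = 0 then -(X - 5) else -(2*X - 5)

noncomputable def qmat : Matrix (Fin 1) (Fin 1) (Polynomial ℝ) := fun _ _ => qpoly

noncomputable def cubic (n : ℕ) : Polynomial ℝ :=
  X * (X^2 - (3*(n:Polynomial ℝ)+5)*X + (10*(n:Polynomial ℝ)+5))


lemma key_mul (n : ℕ) :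
    fromBlocks (blkA n) (blkB n) (blkC n) (blockDiagonal fun _ : Fin n => dmat) *
      fromBlocks qmat 0 (wvec n) 1 =
    fromBlocks (fun _ _ => cubic n) (blkB n) 0 (blockDiagonal fun _ : Fin n => dmat) := by
  rw [fromBlocks_multiply, Matrix.mul_zero, Matrix.mul_zero, Matrix.mul_one, Matrix.mul_one,
    zero_add, zero_add]
  have hA : blkA n * qmat + blkB n * wvec n = (fun _ _ => cubic n) := by
    refine Matrix.ext fun x y => ?_
    simp only [Matrix.add_apply, Matrix.mul_apply, Fintype.sum_prod_type, Fin.sum_univ_two,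
      Fin.sum_univ_one, blkA, blkB, qmat, wvec, cubic]
    have h2 : ((1 : Fin 2) = 0) = False := by simp
    simp only [h2, if_pos rfl, if_false, if_true, Finset.sum_const, Finset.card_univ,
      Fintype.card_fin, nsmul_eq_mul, qpoly, _root_.map_mul, map_ofNat, Polynomial.C_eq_natCast]
    push_cast
    ring
  have hC : blkC n * qmat + (blockDiagonal fun _ : Fin n => dmat) * wvec n = 0 := by
    refine Matrix.ext fun p y => ?_
    obtain ⟨r, i⟩ := p
    simp only [Matrix.add_apply, Matrix.mul_apply, Fin.sum_univ_one, Fintype.sum_prod_type,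
      Fin.sum_univ_two, blkC, qmat, wvec, blockDiagonal_apply, dmat]
    fin_cases r <;> simp [Finset.sum_ite_eq, qpoly] <;> ring_nf <;> simp [Finset.filter_eq]
  rw [hA, hC]

lemma qpoly_ne : (qpoly : Polynomial ℝ) ≠ 0 := fun h => by
  simpa [qpoly] using congrArg (eval 0) h

lemma charpoly_treeLap (n : ℕ) (hn : 1 ≤ n) :
    (treeLap n).charpoly = qpoly^(n-1) * cubic n := by
  have hdet1 : det (fromBlocks qmat 0 (wvec n) 1) = qpoly := by
    rw [det_fromBlocks_zero₁₂]
    simp [qmat, Matrix.det_fin_one]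
  have hDd : det (blockDiagonal fun _ : Fin n => dmat) = qpoly^n := by
    rw [det_blockDiagonal]
    have : (dmat).det = qpoly := by
      simp [dmat, Matrix.det_fin_two_of, qpoly]; ring
    simp [this]
  have h1 : (treeLap n).charpoly
      = det (fromBlocks (blkA n) (blkB n) (blkC n) (blockDiagonal fun _ : Fin n => dmat)) := by
    rw [Matrix.charpoly, ← Matrix.det_submatrix_equiv_self (treeEquiv n), reindex_charmatrix]
  have h2 : (treeLap n).charpoly * qpoly = cubic n * qpoly^n := by
    calc (treeLap n).charpoly * qpoly
        = (fromBlocks (blkA n) (blkB n) (blkC n) (blockDiagonal fun _ : Fin n => dmat)).det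
          * (fromBlocks qmat 0 (wvec n) 1).det := by rw [h1, hdet1]
      _ = ((fromBlocks (blkA n) (blkB n) (blkC n) (blockDiagonal fun _ : Fin n => dmat))
          * fromBlocks qmat 0 (wvec n) 1).det := (Matrix.det_mul _ _).symm
      _ = cubic n * qpoly^n := by
          rw [key_mul]; exact (det_fromBlocks_zero₂₁ _ _ _).trans (by rw [hDd]; exact congrArg (· * qpoly ^ n) (Matrix.det_fin_one (A := (fun _ _ => cubic n : Matrix (Fin 1) (Fin 1) (Polynomial ℝ)))))
  have h3 : cubic n * qpoly^n = (qpoly^(n-1) * cubic n) * qpoly := by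
    obtain ⟨m, rfl⟩ : ∃ m, n = m + 1 := ⟨n-1, by omega⟩
    simp only [Nat.add_sub_cancel, pow_succ]
    ring
  exact mul_right_cancel₀ qpoly_ne (h2.trans h3)

/-- The Laplacian of `T³_n` has eigenvalues `(5 ± √5)/2`, each with
(algebraic) multiplicity `n - 1`, eigenvalue `0` with multiplicity `1`, and two
further eigenvalues `(3n + 5 ± √(9n² - 10n + 5))/2`, the roots of
`λ² - (3n+5) λ + 10n + 5`. -/
theorem stmt15 (n : ℕ) (hn : 1 ≤ n) :
    ((treeLap n).charpoly.rootMultiplicity ((5 + Real.sqrt 5)/2) = n - 1) ∧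
    ((treeLap n).charpoly.rootMultiplicity ((5 - Real.sqrt 5)/2) = n - 1) ∧
    ((treeLap n).charpoly.rootMultiplicity 0 = 1) ∧
    ((treeLap n).charpoly.IsRoot
      ((3*(n : ℝ) + 5 + Real.sqrt (9*(n : ℝ)^2 - 10*(n : ℝ) + 5))/2)) ∧
    ((treeLap n).charpoly.IsRoot
      ((3*(n : ℝ) + 5 - Real.sqrt (9*(n : ℝ)^2 - 10*(n : ℝ) + 5))/2)) ∧
    (∀ μ : ℝ, (treeLap n).charpoly.IsRoot μ →
      μ = 0 ∨ μ = (5 + Real.sqrt 5)/2 ∨ μ = (5 - Real.sqrt 5)/2 ∨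
        μ^2 - (3*(n : ℝ) + 5) * μ + 10*(n : ℝ) + 5 = 0) := by
  have hn' : (1:ℝ) ≤ (n:ℝ) := by exact_mod_cast hn
  set s : ℝ := Real.sqrt 5 with hs_def
  have hs2 : s^2 = 5 := Real.sq_sqrt (by norm_num)
  have hspos : 0 < s := Real.sqrt_pos.mpr (by norm_num)
  have hslt : s < 5 := by nlinarith
  set α : ℝ := (5 + s)/2 with hα_def
  set β : ℝ := (5 - s)/2 with hβ_def
  -- factorization of qpoly
  have e1 : (C α + C β : Polynomial ℝ) = 5 := by
    rw [← C_add, show α + β = (5:ℝ) by rw [hα_def, hβ_def]; ring, map_ofNat]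
  have e2 : (C α * C β : Polynomial ℝ) = 5 := by
    rw [← C_mul, show α * β = (5:ℝ) by rw [hα_def, hβ_def]; nlinarith, map_ofNat]
  have hfac : (qpoly : Polynomial ℝ) = (X - C α) * (X - C β) := by
    rw [qpoly]; linear_combination (X : Polynomial ℝ) * e1 - e2
  -- basic nonvanishing facts
  have hαβ : α ≠ β := by rw [hα_def, hβ_def]; intro h; nlinarith
  have hα0 : α ≠ 0 := by rw [hα_def]; nlinarith
  have hβ0 : β ≠ 0 := by rw [hβ_def]; nlinarith
  have hαq : α^2 - 5*α + 5 = 0 := by rw [hα_def]; nlinarith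
  have hβq : β^2 - 5*β + 5 = 0 := by rw [hβ_def]; nlinarith
  have hrα : α^2 - (3*(n:ℝ)+5)*α + (10*(n:ℝ)+5) ≠ 0 := by
    have h10 : 10 - 3*α ≠ 0 := by rw [hα_def]; intro h; nlinarith
    have : α^2 - (3*(n:ℝ)+5)*α + (10*(n:ℝ)+5) = (n:ℝ) * (10 - 3*α) := by
      linear_combination hαq
    rw [this]
    exact mul_ne_zero (by positivity) h10
  have hrβ : β^2 - (3*(n:ℝ)+5)*β + (10*(n:ℝ)+5) ≠ 0 := by
    have h10 : 10 - 3*β ≠ 0 := by rw [hβ_def]; intro h; nlinarith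
    have : β^2 - (3*(n:ℝ)+5)*β + (10*(n:ℝ)+5) = (n:ℝ) * (10 - 3*β) := by
      linear_combination hβq
    rw [this]
    exact mul_ne_zero (by positivity) h10
  -- eval of cubic
  have hcub_eval : ∀ μ : ℝ, eval μ (cubic n)
      = μ * (μ^2 - (3*(n:ℝ)+5)*μ + (10*(n:ℝ)+5)) := by
    intro μ; simp [cubic]
  have hcub_ne : cubic n ≠ 0 := by
    intro h
    have := congrArg (eval 1) h
    rw [hcub_eval 1] at this
    simp at this
    nlinarith
  have hXr_ne : ∀ γ : ℝ, γ ≠ 0 → γ^2 - (3*(n:ℝ)+5)*γ + (10*(n:ℝ)+5) ≠ 0 →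
      ¬ (cubic n).IsRoot γ := by
    intro γ h1 h2 h
    rw [Polynomial.IsRoot, hcub_eval] at h
    exact (mul_ne_zero h1 h2) h
  have hXa_ne : (X - C α : Polynomial ℝ) ≠ 0 := X_sub_C_ne_zero α
  have hXb_ne : (X - C β : Polynomial ℝ) ≠ 0 := X_sub_C_ne_zero β
  have hCP := charpoly_treeLap n hn
  refine ⟨?_, ?_, ?_, ?_, ?_, ?_⟩
  · -- multiplicity of α
    have m0 : Polynomial.rootMultiplicity α ((X - C β)^(n-1) * cubic n) = 0 := by
      apply Polynomial.rootMultiplicity_eq_zero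
      intro h
      rw [Polynomial.IsRoot, eval_mul, eval_pow, eval_sub, eval_X, eval_C, hcub_eval] at h
      rcases mul_eq_zero.mp h with h | h
      · exact pow_ne_zero _ (sub_ne_zero.mpr hαβ) h
      · exact (mul_ne_zero hα0 hrα) h
    rw [hCP, hfac, mul_pow, mul_assoc,
      Polynomial.rootMultiplicity_mul
        (mul_ne_zero (pow_ne_zero _ hXa_ne) (mul_ne_zero (pow_ne_zero _ hXb_ne) hcub_ne)),
      Polynomial.rootMultiplicity_X_sub_C_pow, m0]
    omega
  · -- multiplicity of β
    have m0 : Polynomial.rootMultiplicity β ((X - C α)^(n-1) * cubic n) = 0 := by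
      apply Polynomial.rootMultiplicity_eq_zero
      intro h
      rw [Polynomial.IsRoot, eval_mul, eval_pow, eval_sub, eval_X, eval_C, hcub_eval] at h
      rcases mul_eq_zero.mp h with h | h
      · exact pow_ne_zero _ (sub_ne_zero.mpr (Ne.symm hαβ)) h
      · exact (mul_ne_zero hβ0 hrβ) h
    rw [hCP, hfac, mul_comm (X - C α), mul_pow, mul_assoc,
      Polynomial.rootMultiplicity_mul
        (mul_ne_zero (pow_ne_zero _ hXb_ne) (mul_ne_zero (pow_ne_zero _ hXa_ne) hcub_ne)),
      Polynomial.rootMultiplicity_X_sub_C_pow, m0]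
    omega
  · -- multiplicity of 0
    have hq_ne : (qpoly : Polynomial ℝ) ≠ 0 := qpoly_ne
    have hrq_ne : (X^2 - (3*(n:Polynomial ℝ)+5)*X + (10*(n:Polynomial ℝ)+5)) ≠ 0 := by
      intro h
      have := congrArg (eval 0) h
      simp at this
      nlinarith
    rw [hCP, cubic,
      Polynomial.rootMultiplicity_mul
        (mul_ne_zero (pow_ne_zero _ hq_ne) (mul_ne_zero X_ne_zero hrq_ne)),
      Polynomial.rootMultiplicity_mul (mul_ne_zero X_ne_zero hrq_ne)]
    have m1 : (qpoly^(n-1) : Polynomial ℝ).rootMultiplicity 0 = 0 := by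
      rw [Polynomial.rootMultiplicity_eq_zero]
      intro h
      rw [Polynomial.IsRoot, eval_pow] at h
      have : eval 0 (qpoly : Polynomial ℝ) = 5 := by simp [qpoly]
      rw [this] at h
      exact pow_ne_zero _ (by norm_num) h
    have m2 : (X : Polynomial ℝ).rootMultiplicity 0 = 1 := by
      have := Polynomial.rootMultiplicity_X_sub_C_self (x := (0:ℝ))
      simpa using this
    have m3 : (X^2 - (3*(n:Polynomial ℝ)+5)*X + (10*(n:Polynomial ℝ)+5)).rootMultiplicity 0
        = 0 := by
      rw [Polynomial.rootMultiplicity_eq_zero]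
      intro h
      rw [Polynomial.IsRoot] at h
      simp at h
      nlinarith
    rw [m1, m2, m3]
  · -- root (3n+5+√d)/2
    have hd : (0:ℝ) ≤ 9*(n:ℝ)^2 - 10*(n:ℝ) + 5 := by nlinarith [sq_nonneg (3*(n:ℝ)-2)]
    have hsd : (Real.sqrt (9*(n:ℝ)^2 - 10*(n:ℝ) + 5))^2 = 9*(n:ℝ)^2 - 10*(n:ℝ) + 5 :=
      Real.sq_sqrt hd
    rw [hCP, Polynomial.IsRoot, eval_mul, hcub_eval]
    have : ((3*(n:ℝ)+5+Real.sqrt (9*(n:ℝ)^2 - 10*(n:ℝ) + 5))/2)^2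
        - (3*(n:ℝ)+5)*((3*(n:ℝ)+5+Real.sqrt (9*(n:ℝ)^2 - 10*(n:ℝ) + 5))/2)
        + (10*(n:ℝ)+5) = 0 := by linear_combination hsd/4
    rw [this]; ring
  · have hd : (0:ℝ) ≤ 9*(n:ℝ)^2 - 10*(n:ℝ) + 5 := by nlinarith [sq_nonneg (3*(n:ℝ)-2)]
    have hsd : (Real.sqrt (9*(n:ℝ)^2 - 10*(n:ℝ) + 5))^2 = 9*(n:ℝ)^2 - 10*(n:ℝ) + 5 :=
      Real.sq_sqrt hd
    rw [hCP, Polynomial.IsRoot, eval_mul, hcub_eval]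
    have : ((3*(n:ℝ)+5-Real.sqrt (9*(n:ℝ)^2 - 10*(n:ℝ) + 5))/2)^2
        - (3*(n:ℝ)+5)*((3*(n:ℝ)+5-Real.sqrt (9*(n:ℝ)^2 - 10*(n:ℝ) + 5))/2)
        + (10*(n:ℝ)+5) = 0 := by linear_combination hsd/4
    rw [this]; ring
  · -- classification of roots
    intro μ hroot
    rw [hCP, Polynomial.IsRoot, eval_mul, eval_pow, hcub_eval] at hroot
    have hevq : eval μ (qpoly : Polynomial ℝ) = μ^2 - 5*μ + 5 := by simp [qpoly]
    rcases mul_eq_zero.mp hroot with h | h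
    · -- qpoly(μ)^(n-1) = 0
      have hq0 : μ^2 - 5*μ + 5 = 0 := by
        by_contra hne
        exact pow_ne_zero _ (hevq ▸ hne : eval μ (qpoly:Polynomial ℝ) ≠ 0) h
      have : (2*μ - 5 - s) * (2*μ - 5 + s) = 0 := by linear_combination 4*hq0 - hs2
      rcases mul_eq_zero.mp this with h' | h'
      · right; left; rw [hα_def]; linarith
      · right; right; left; rw [hβ_def]; linarith
    · rcases mul_eq_zero.mp h with h' | h'
      · left; exact h'
      · right; right; right; linear_combination h'
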